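/- Suppose y ↦ p(y|θ) is twice differentiable for each θ, the posterior θ ↦ p(θ|y_{1:t}) is a probability density, and differentiation under the integral sign is valid (dominated by integrable functions h_{1,t}, h_{2,t}). Then for the predictive density p(y_t|y_{1:t-1}) = ∫ p(y_t|θ) p(θ|y_{1:t-1}) dθ, one has (d/dy_t) log p(y_t|y_{1:t-1}) = E_t[(d/dy_t) log p(y_t|θ)], where E_t denotes expectation over θ ~ p(dθ|y_{1:t}) (the posterior including y_t). -/

import Mathlib

/-! Differentiating under the integral sign gives `Z' = ∫ ∂_y f · prior` for the predictive
density `Z`, and `Z > 0` because `f > 0` and the prior has mass one. Writing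
`∂_y f = f · ∂_y log f` turns `Z' / Z` into the expectation of `∂_y log f` under the posterior
`f · prior / Z`. -/

open MeasureTheory Real Filter Topology

section DerivIntegral

variable {Θ E : Type*} [MeasurableSpace Θ] {μ : Measure Θ}
  [NormedAddCommGroup E] [NormedSpace ℝ E]

theorem aestronglyMeasurable_deriv_of_forall_differentiableAt {F : ℝ → Θ → E} {y₀ : ℝ}
    (hF_meas : ∀ y, AEStronglyMeasurable (F y) μ)
    (hF_diff : ∀ θ, DifferentiableAt ℝ (F · θ) y₀) :
    AEStronglyMeasurable (fun θ => deriv (F · θ) y₀) μ :=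
  aestronglyMeasurable_of_tendsto_ae (𝓝[≠] y₀)
    (f := fun y θ => slope (F · θ) y₀ y)
    (fun y => ((hF_meas y).sub (hF_meas y₀)).const_smul _)
    (ae_of_all _ fun θ => hasDerivAt_iff_tendsto_slope.mp (hF_diff θ).hasDerivAt)

theorem hasDerivAt_integral_of_forall_norm_deriv_le {F : ℝ → Θ → E} {bound : Θ → ℝ}
    (hF_int : ∀ y, Integrable (F y) μ) (hF_diff : ∀ y θ, DifferentiableAt ℝ (F · θ) y)
    (h_bound : ∀ y θ, ‖deriv (F · θ) y‖ ≤ bound θ) (bound_integrable : Integrable bound μ)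
    (y₀ : ℝ) :
    HasDerivAt (fun y => ∫ θ, F y θ ∂μ) (∫ θ, deriv (F · θ) y₀ ∂μ) y₀ :=
  (hasDerivAt_integral_of_dominated_loc_of_deriv_le Filter.univ_mem
    (Eventually.of_forall fun y => (hF_int y).aestronglyMeasurable) (hF_int y₀)
    (aestronglyMeasurable_deriv_of_forall_differentiableAt
      (fun y => (hF_int y).aestronglyMeasurable) (hF_diff y₀))
    (ae_of_all _ fun θ y _ => h_bound y θ) bound_integrable
    (ae_of_all _ fun θ y _ => (hF_diff y θ).hasDerivAt)).2

end DerivIntegral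

theorem integral_mul_pos_of_pos {Θ : Type*} [MeasurableSpace Θ] {μ : Measure Θ}
    {f w : Θ → ℝ} (hf : ∀ θ, 0 < f θ) (hw : ∀ θ, 0 ≤ w θ) (hw_pos : 0 < ∫ θ, w θ ∂μ)
    (hfw : Integrable (fun θ => f θ * w θ) μ) :
    0 < ∫ θ, f θ * w θ ∂μ := by
  have hw_int : Integrable w μ := Integrable.of_integral_ne_zero hw_pos.ne'
  rw [integral_pos_iff_support_of_nonneg (fun θ => mul_nonneg (hf θ).le (hw θ)) hfw,
    Function.support_mul_of_ne_zero_left fun θ => (hf θ).ne']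
  exact (integral_pos_iff_support_of_nonneg hw hw_int).mp hw_pos

theorem deriv_log_mul_div {f : ℝ → ℝ} {y : ℝ} (hf : DifferentiableAt ℝ f y) (hfy : f y ≠ 0)
    (w Z : ℝ) :
    deriv (fun z => Real.log (f z)) y * (f y * w / Z) = deriv f y * w / Z := by
  rw [(hf.hasDerivAt.log hfy).deriv]
  field_simp

theorem deriv_log_predictive_eq_posterior_expectation
    {Θ : Type*} [MeasurableSpace Θ] (ν : Measure Θ)
    (prior : Θ → ℝ) (f : ℝ → Θ → ℝ)
    (hprior_nonneg : ∀ θ, 0 ≤ prior θ) (hprior_prob : ∫ θ, prior θ ∂ν = 1)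
    (hf_pos : ∀ y θ, 0 < f y θ)
    (hf_smooth : ∀ θ, ContDiff ℝ 2 (fun y => f y θ))
    (hf_int : ∀ y, Integrable (fun θ => f y θ * prior θ) ν)
    (h1 : Θ → ℝ) (h1_int : Integrable h1 ν)
    (hdom1 : ∀ y θ, |prior θ * deriv (fun z => f z θ) y| ≤ h1 θ)
    (y₀ : ℝ) :
    deriv (fun y => Real.log (∫ θ, f y θ * prior θ ∂ν)) y₀ =
      ∫ θ, deriv (fun y => Real.log (f y θ)) y₀ *
        (f y₀ θ * prior θ / ∫ θ', f y₀ θ' * prior θ' ∂ν) ∂ν := by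
  have hf_diff : ∀ y θ, DifferentiableAt ℝ (f · θ) y := fun y θ =>
    (hf_smooth θ).differentiable two_ne_zero y
  have hderiv_mul : ∀ y θ, deriv (fun z => f z θ * prior θ) y = deriv (f · θ) y * prior θ :=
    fun y θ => deriv_mul_const (hf_diff y θ) _
  have hZ : HasDerivAt (fun y => ∫ θ, f y θ * prior θ ∂ν)
      (∫ θ, deriv (f · θ) y₀ * prior θ ∂ν) y₀ := by
    refine (hasDerivAt_integral_of_forall_norm_deriv_le hf_int
      (fun y θ => (hf_diff y θ).mul_const _) (fun y θ => ?_) h1_int y₀).congr_deriv ?_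
    · rw [hderiv_mul, norm_eq_abs, mul_comm]
      exact hdom1 y θ
    · simp only [hderiv_mul]
  have hZ_pos : 0 < ∫ θ, f y₀ θ * prior θ ∂ν :=
    integral_mul_pos_of_pos (hf_pos y₀) hprior_nonneg (hprior_prob ▸ one_pos) (hf_int y₀)
  rw [(hZ.log hZ_pos.ne').deriv, ← integral_div]
  exact integral_congr_ae (ae_of_all _ fun θ =>
    (deriv_log_mul_div (hf_diff y₀ θ) (hf_pos y₀ θ).ne' _ _).symm)
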